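/- Fix y' ∈ ℝ and finite nonempty sets S, T ⊆ ℝ². Then: (i) there exists x* ∈ ℝ with h_{→S}((x*, y')) = h_{←T}((x*, y')); and (ii) for every such x*, max_{(p,q) ∈ S × T} δ'_{pq}(y') = h_{→S}((x*, y')) = h_{←T}((x*, y')). -/

import Mathlib

open Metric Set

noncomputable section

/-- Points of the Euclidean plane ℝ². -/
abbrev Pt : Type := EuclideanSpace ℝ (Fin 2)

/-- The point (x, y) ∈ ℝ². -/
def pt (x y : ℝ) : Pt := (WithLp.equiv 2 (Fin 2 → ℝ)).symm ![x, y]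

/-- The leftward horizontal halfline ←p = {(x, y_p) : x ≤ x_p}. -/
def leftRay (p : Pt) : Set Pt := {z : Pt | z 1 = p 1 ∧ z 0 ≤ p 0}

/-- The rightward horizontal halfline →p = {(x, y_p) : x ≥ x_p}. -/
def rightRay (p : Pt) : Set Pt := {z : Pt | z 1 = p 1 ∧ p 0 ≤ z 0}

/-- h_{←p}(q): Euclidean distance from q to the leftward halfline at p. -/
def hL (p q : Pt) : ℝ := infDist q (leftRay p)

/-- h_{→p}(q): Euclidean distance from q to the rightward halfline at p. -/
def hR (p q : Pt) : ℝ := infDist q (rightRay p)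

/-- h_{←S}(q) = max_{p ∈ S} h_{←p}(q). -/
def hLS (S : Finset Pt) (hS : S.Nonempty) (q : Pt) : ℝ := S.sup' hS fun p => hL p q

/-- h_{→S}(q) = max_{p ∈ S} h_{→p}(q). -/
def hRS (S : Finset Pt) (hS : S.Nonempty) (q : Pt) : ℝ := S.sup' hS fun p => hR p q

/-- δ_{pq}(y) = inf_x max{‖(x,y) − p‖, ‖(x,y) − q‖}. -/
def delta (p q : Pt) (y : ℝ) : ℝ := ⨅ x : ℝ, max ‖pt x y - p‖ ‖pt x y - q‖

/-- δ'_{pq}(y) = inf_x max{h_{←q}((x,y)), h_{→p}((x,y))}. -/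
def delta' (p q : Pt) (y : ℝ) : ℝ := ⨅ x : ℝ, max (hL q (pt x y)) (hR p (pt x y))

lemma pt0 (x y : ℝ) : pt x y 0 = x := rfl
lemma pt1 (x y : ℝ) : pt x y 1 = y := rfl

lemma pt_eta (z : Pt) : pt (z 0) (z 1) = z := by
  refine PiLp.ext fun i => ?_; fin_cases i <;> rfl

lemma dist_pt_pt (a b c d : ℝ) :
    dist (pt a b) (pt c d) = Real.sqrt ((a - c)^2 + (b - d)^2) := by
  rw [EuclideanSpace.dist_eq, Fin.sum_univ_two]
  simp [pt0, pt1, Real.dist_eq, sq_abs]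

lemma coord_le_dist (q z : Pt) (i : Fin 2) : |q i - z i| ≤ dist q z := by
  rw [EuclideanSpace.dist_eq, Fin.sum_univ_two]
  fin_cases i
  · rw [← Real.sqrt_sq_eq_abs]
    apply Real.sqrt_le_sqrt
    simp [Real.dist_eq, sq_abs]
    nlinarith [sq_nonneg (q 1 - z 1)]
  · rw [← Real.sqrt_sq_eq_abs]
    apply Real.sqrt_le_sqrt
    simp [Real.dist_eq, sq_abs]
    nlinarith [sq_nonneg (q 0 - z 0)]

lemma rightRay_nonempty (p : Pt) : (rightRay p).Nonempty :=
  ⟨p, rfl, le_refl _⟩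

lemma leftRay_nonempty (p : Pt) : (leftRay p).Nonempty :=
  ⟨p, rfl, le_refl _⟩

lemma le_infDist' {s : Set Pt} (hs : s.Nonempty) {x : Pt} {d : ℝ}
    (h : ∀ z ∈ s, d ≤ dist x z) : d ≤ infDist x s := by
  by_contra h'
  push_neg at h'
  rw [infDist_lt_iff hs] at h'
  obtain ⟨z, hz, hlt⟩ := h'
  exact absurd (h z hz) (not_le.2 hlt)

lemma hR_antitone (p : Pt) (y : ℝ) {x₁ x₂ : ℝ} (h : x₁ ≤ x₂) :
    hR p (pt x₂ y) ≤ hR p (pt x₁ y) := by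
  apply le_infDist' (rightRay_nonempty p)
  intro z hz
  obtain ⟨hz1, hz0⟩ := hz
  have hmem : pt (z 0 + (x₂ - x₁)) (p 1) ∈ rightRay p := by
    refine ⟨rfl, ?_⟩
    rw [pt0]; linarith
  calc hR p (pt x₂ y) ≤ dist (pt x₂ y) (pt (z 0 + (x₂ - x₁)) (p 1)) :=
        infDist_le_dist_of_mem hmem
    _ = dist (pt x₁ y) z := by
        rw [← pt_eta z, dist_pt_pt, dist_pt_pt, hz1]; simp only [pt0]
        congr 1
        ring

lemma hL_monotone (q : Pt) (y : ℝ) {x₁ x₂ : ℝ} (h : x₁ ≤ x₂) :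
    hL q (pt x₁ y) ≤ hL q (pt x₂ y) := by
  apply le_infDist' (leftRay_nonempty q)
  intro z hz
  obtain ⟨hz1, hz0⟩ := hz
  have hmem : pt (z 0 - (x₂ - x₁)) (q 1) ∈ leftRay q := by
    refine ⟨rfl, ?_⟩
    rw [pt0]; linarith
  calc hL q (pt x₁ y) ≤ dist (pt x₁ y) (pt (z 0 - (x₂ - x₁)) (q 1)) :=
        infDist_le_dist_of_mem hmem
    _ = dist (pt x₂ y) z := by
        rw [← pt_eta z, dist_pt_pt, dist_pt_pt, hz1]; simp only [pt0]
        congr 1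
        ring

lemma hR_lower (p : Pt) (x y : ℝ) : p 0 - x ≤ hR p (pt x y) := by
  apply le_infDist' (rightRay_nonempty p)
  intro z hz
  have h0 := coord_le_dist (pt x y) z 0
  rw [pt0] at h0
  have := hz.2
  calc p 0 - x ≤ z 0 - x := by linarith
    _ ≤ |x - z 0| := by rw [abs_sub_comm]; exact le_abs_self _
    _ ≤ dist (pt x y) z := h0

lemma hL_lower (q : Pt) (x y : ℝ) : x - q 0 ≤ hL q (pt x y) := by
  apply le_infDist' (leftRay_nonempty q)
  intro z hz
  have h0 := coord_le_dist (pt x y) z 0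
  rw [pt0] at h0
  have := hz.2
  calc x - q 0 ≤ x - z 0 := by linarith
    _ ≤ |x - z 0| := le_abs_self _
    _ ≤ dist (pt x y) z := h0

lemma hL_upper (q : Pt) {x : ℝ} (y : ℝ) (h : x ≤ q 0) : hL q (pt x y) ≤ |y - q 1| := by
  have hmem : pt x (q 1) ∈ leftRay q := ⟨rfl, by rw [pt0]; exact h⟩
  calc hL q (pt x y) ≤ dist (pt x y) (pt x (q 1)) := infDist_le_dist_of_mem hmem
    _ = |y - q 1| := by
        rw [dist_pt_pt, ← Real.sqrt_sq_eq_abs]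
        congr 1
        ring

lemma hR_upper (p : Pt) {x : ℝ} (y : ℝ) (h : p 0 ≤ x) : hR p (pt x y) ≤ |y - p 1| := by
  have hmem : pt x (p 1) ∈ rightRay p := ⟨rfl, by rw [pt0]; exact h⟩
  calc hR p (pt x y) ≤ dist (pt x y) (pt x (p 1)) := infDist_le_dist_of_mem hmem
    _ = |y - p 1| := by
        rw [dist_pt_pt, ← Real.sqrt_sq_eq_abs]
        congr 1
        ring

lemma pt_isometry (y : ℝ) : Isometry fun x : ℝ => pt x y := by
  apply Isometry.of_dist_eq
  intro a b
  rw [dist_pt_pt, Real.dist_eq, sub_self, ← Real.sqrt_sq_eq_abs]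
  congr 1
  ring

lemma hR_cont (p : Pt) (y : ℝ) : Continuous fun x => hR p (pt x y) :=
  (continuous_infDist_pt (rightRay p)).comp (pt_isometry y).continuous

lemma hL_cont (q : Pt) (y : ℝ) : Continuous fun x => hL q (pt x y) :=
  (continuous_infDist_pt (leftRay q)).comp (pt_isometry y).continuous

theorem stmt_10 (y' : ℝ) (S T : Finset Pt) (hS : S.Nonempty) (hT : T.Nonempty) :
    (∃ xs : ℝ, hRS S hS (pt xs y') = hLS T hT (pt xs y')) ∧
    (∀ xs : ℝ, hRS S hS (pt xs y') = hLS T hT (pt xs y') →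
      (S ×ˢ T).sup' (hS.product hT) (fun pq => delta' pq.1 pq.2 y')
          = hRS S hS (pt xs y') ∧
      (S ×ˢ T).sup' (hS.product hT) (fun pq => delta' pq.1 pq.2 y')
          = hLS T hT (pt xs y')) := by
  simp only [hRS, hLS, delta']
  have f_anti : ∀ {x₁ x₂ : ℝ}, x₁ ≤ x₂ →
      (S.sup' hS fun p => hR p (pt x₂ y')) ≤ S.sup' hS fun p => hR p (pt x₁ y') := by
    intro x₁ x₂ h
    apply Finset.sup'_le
    intro p hp
    exact (hR_antitone p y' h).trans (Finset.le_sup' (fun p => hR p (pt x₁ y')) hp)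
  have g_mono : ∀ {x₁ x₂ : ℝ}, x₁ ≤ x₂ →
      (T.sup' hT fun q => hL q (pt x₁ y')) ≤ T.sup' hT fun q => hL q (pt x₂ y') := by
    intro x₁ x₂ h
    apply Finset.sup'_le
    intro q hq
    exact (hL_monotone q y' h).trans (Finset.le_sup' (fun q => hL q (pt x₂ y')) hq)
  have f_cont : Continuous fun x => S.sup' hS fun p => hR p (pt x y') :=
    Continuous.finset_sup'_apply hS fun p _ => hR_cont p y'
  have g_cont : Continuous fun x => T.sup' hT fun q => hL q (pt x y') :=
    Continuous.finset_sup'_apply hT fun q _ => hL_cont q y'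
  obtain ⟨p₀, hp₀⟩ := id hS
  obtain ⟨q₀, hq₀⟩ := id hT
  set C : ℝ := T.sup' hT fun q => |y' - q 1| with hC
  set D : ℝ := S.sup' hS fun p => |y' - p 1| with hD
  set A : ℝ := T.inf' hT fun q => q 0 with hA
  set B : ℝ := S.sup' hS fun p => p 0 with hB
  set x₁ : ℝ := min A (p₀ 0 - C) with hx₁
  set x₂ : ℝ := max B (q₀ 0 + D) with hx₂
  have h1 : (T.sup' hT fun q => hL q (pt x₁ y')) ≤ S.sup' hS fun p => hR p (pt x₁ y') := by
    have hg1 : (T.sup' hT fun q => hL q (pt x₁ y')) ≤ C := by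
      apply Finset.sup'_le
      intro q hq
      have hle : x₁ ≤ q 0 :=
        (min_le_left _ _).trans (Finset.inf'_le (fun q : Pt => q 0) hq)
      exact (hL_upper q y' hle).trans (Finset.le_sup' (fun q : Pt => |y' - q 1|) hq)
    have hf1 : C ≤ S.sup' hS fun p => hR p (pt x₁ y') := by
      have hlow := hR_lower p₀ x₁ y'
      have hx : x₁ ≤ p₀ 0 - C := min_le_right _ _
      have hcc : C ≤ hR p₀ (pt x₁ y') := by linarith
      exact hcc.trans (Finset.le_sup' (fun p => hR p (pt x₁ y')) hp₀)
    linarith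
  have h2 : (S.sup' hS fun p => hR p (pt x₂ y')) ≤ T.sup' hT fun q => hL q (pt x₂ y') := by
    have hf2 : (S.sup' hS fun p => hR p (pt x₂ y')) ≤ D := by
      apply Finset.sup'_le
      intro p hp
      have hle : p 0 ≤ x₂ :=
        (Finset.le_sup' (fun p : Pt => p 0) hp).trans (le_max_left _ _)
      exact (hR_upper p y' hle).trans (Finset.le_sup' (fun p : Pt => |y' - p 1|) hp)
    have hg2 : D ≤ T.sup' hT fun q => hL q (pt x₂ y') := by
      have hlow := hL_lower q₀ x₂ y'
      have hx : q₀ 0 + D ≤ x₂ := le_max_right _ _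
      have hdd : D ≤ hL q₀ (pt x₂ y') := by linarith
      exact hdd.trans (Finset.le_sup' (fun q => hL q (pt x₂ y')) hq₀)
    linarith
  set a : ℝ := min x₁ x₂ with ha
  set b : ℝ := max x₁ x₂ with hb
  have hab : a ≤ b := min_le_max
  have hga : (T.sup' hT fun q => hL q (pt a y')) ≤ S.sup' hS fun p => hR p (pt a y') :=
    (g_mono (min_le_left _ _)).trans (h1.trans (f_anti (min_le_left _ _)))
  have hfb : (S.sup' hS fun p => hR p (pt b y')) ≤ T.sup' hT fun q => hL q (pt b y') :=
    (f_anti (le_max_right _ _)).trans (h2.trans (g_mono (le_max_right _ _)))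
  have hivt : ∃ xs : ℝ, (S.sup' hS fun p => hR p (pt xs y'))
      = T.sup' hT fun q => hL q (pt xs y') := by
    have hc : ContinuousOn (fun x => (S.sup' hS fun p => hR p (pt x y'))
        - T.sup' hT fun q => hL q (pt x y')) (Icc a b) :=
      (f_cont.sub g_cont).continuousOn
    have hsub := intermediate_value_Icc' hab hc
    have h0 : (0 : ℝ) ∈ Icc
        ((S.sup' hS fun p => hR p (pt b y')) - T.sup' hT fun q => hL q (pt b y'))
        ((S.sup' hS fun p => hR p (pt a y')) - T.sup' hT fun q => hL q (pt a y')) :=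
      ⟨by linarith, by linarith⟩
    obtain ⟨xs, _, hxs⟩ := hsub h0
    refine ⟨xs, ?_⟩
    have : (S.sup' hS fun p => hR p (pt xs y'))
        - (T.sup' hT fun q => hL q (pt xs y')) = 0 := hxs
    linarith
  refine ⟨hivt, ?_⟩
  intro xs hx
  have key : ((S ×ˢ T).sup' (hS.product hT) fun pq =>
        ⨅ x : ℝ, max (hL pq.2 (pt x y')) (hR pq.1 (pt x y')))
      = S.sup' hS fun p => hR p (pt xs y') := by
    apply le_antisymm
    · apply Finset.sup'_le
      rintro ⟨p, q⟩ hpq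
      rw [Finset.mem_product] at hpq
      have hbdd : BddBelow (Set.range fun x => max (hL q (pt x y')) (hR p (pt x y'))) := by
        refine ⟨0, ?_⟩
        rintro r ⟨x, rfl⟩
        exact le_max_of_le_left infDist_nonneg
      calc (⨅ x : ℝ, max (hL q (pt x y')) (hR p (pt x y')))
          ≤ max (hL q (pt xs y')) (hR p (pt xs y')) := ciInf_le hbdd xs
        _ ≤ S.sup' hS fun p => hR p (pt xs y') := by
            apply max_le
            · calc hL q (pt xs y') ≤ T.sup' hT fun q => hL q (pt xs y') :=
                    Finset.le_sup' (fun q => hL q (pt xs y')) hpq.2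
                _ = S.sup' hS fun p => hR p (pt xs y') := hx.symm
            · exact Finset.le_sup' (fun p => hR p (pt xs y')) hpq.1
    · obtain ⟨pm, hpm, hpmeq⟩ := Finset.exists_mem_eq_sup' hS fun p => hR p (pt xs y')
      obtain ⟨qm, hqm, hqmeq⟩ := Finset.exists_mem_eq_sup' hT fun q => hL q (pt xs y')
      have hdel : (S.sup' hS fun p => hR p (pt xs y'))
          ≤ ⨅ x : ℝ, max (hL qm (pt x y')) (hR pm (pt x y')) := by
        apply le_ciInf
        intro x
        rcases le_total x xs with hle | hle
        · calc (S.sup' hS fun p => hR p (pt xs y')) = hR pm (pt xs y') := hpmeq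
            _ ≤ hR pm (pt x y') := hR_antitone pm y' hle
            _ ≤ _ := le_max_right _ _
        · calc (S.sup' hS fun p => hR p (pt xs y'))
              = T.sup' hT fun q => hL q (pt xs y') := hx
            _ = hL qm (pt xs y') := hqmeq
            _ ≤ hL qm (pt x y') := hL_monotone qm y' hle
            _ ≤ _ := le_max_left _ _
      have hmem : (pm, qm) ∈ S ×ˢ T := Finset.mem_product.mpr ⟨hpm, hqm⟩
      exact hdel.trans (Finset.le_sup'
        (fun pq : Pt × Pt => ⨅ x : ℝ, max (hL pq.2 (pt x y')) (hR pq.1 (pt x y'))) hmem)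
  exact ⟨key, key.trans hx⟩
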